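/- arXiv:1903.06305 — 9 statements merged into one kernel-verified Lean document; each statement's English description precedes it below -/
import Mathlib

section
/- Let X be the number of empty boxes when b balls are thrown independently and uniformly at random into c boxes (b ≥ 0, c ≥ 2). Then Var(X) = c(c-1)((c-2)/c)^b + c((c-1)/c)^b − c²((c-1)/c)^{2b}. -/
open Finset

/-- The number of empty boxes when the balls land according to `ω : Fin b → Fin c`. -/
def emptyCount {b c : ℕ} (ω : Fin b → Fin c) : ℕ :=
  (Finset.univ.filter (fun j : Fin c => ∀ i : Fin b, ω i ≠ j)).card

lemma card_avoid (b c : ℕ) (S : Finset (Fin c)) :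
    (Finset.univ.filter fun ω : Fin b → Fin c => ∀ i, ω i ∉ S).card
      = (c - S.card) ^ b := by
  rw [← Fintype.card_subtype]
  rw [Fintype.card_congr (Equiv.subtypePiEquivPi (p := fun _ (x : Fin c) => x ∉ S))]
  rw [Fintype.card_pi]
  have : Fintype.card {x : Fin c // x ∉ S} = c - S.card := by
    rw [Fintype.card_subtype]
    have : (Finset.univ.filter fun x : Fin c => x ∉ S) = Sᶜ := by
      ext x; simp
    rw [this, Finset.card_compl, Fintype.card_fin]
  simp [this]

lemma sum_one (b c : ℕ) :
    ∑ ω : Fin b → Fin c, emptyCount ω = c * (c - 1) ^ b := by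
  have h : ∀ ω : Fin b → Fin c,
      emptyCount ω = ∑ j : Fin c, if ∀ i, ω i ∉ ({j} : Finset (Fin c)) then 1 else 0 := by
    intro ω
    rw [emptyCount, Finset.card_filter]
    simp
  rw [Finset.sum_congr rfl fun ω _ => h ω, Finset.sum_comm]
  have hj : ∀ j : Fin c,
      (∑ ω : Fin b → Fin c, if ∀ i, ω i ∉ ({j} : Finset (Fin c)) then 1 else 0)
        = (c - 1) ^ b := by
    intro j
    rw [← Finset.card_filter, card_avoid, Finset.card_singleton]
  rw [Finset.sum_congr rfl fun j _ => hj j, Finset.sum_const, Finset.card_univ,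
    Fintype.card_fin, smul_eq_mul]

lemma sum_sq (b c : ℕ) :
    ∑ ω : Fin b → Fin c, (emptyCount ω) ^ 2
      = c * (c - 1) ^ b + c * (c - 1) * (c - 2) ^ b := by
  have h : ∀ ω : Fin b → Fin c,
      (emptyCount ω) ^ 2 = ∑ j : Fin c, ∑ k : Fin c,
        if ∀ i, ω i ∉ ({j, k} : Finset (Fin c)) then 1 else 0 := by
    intro ω
    rw [emptyCount, sq, Finset.card_filter, Finset.sum_mul_sum]
    refine Finset.sum_congr rfl fun j _ => Finset.sum_congr rfl fun k _ => ?_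
    have : (∀ i, ω i ∉ ({j, k} : Finset (Fin c))) ↔ (∀ i, ω i ≠ j) ∧ (∀ i, ω i ≠ k) := by
      simp [forall_and]
    simp only [ite_zero_mul_ite_zero, mul_one]
    exact if_congr this.symm rfl rfl
  rw [Finset.sum_congr rfl fun ω _ => h ω, Finset.sum_comm]
  have hj : ∀ j : Fin c,
      (∑ ω : Fin b → Fin c, ∑ k : Fin c,
        if ∀ i, ω i ∉ ({j, k} : Finset (Fin c)) then 1 else 0)
        = (c - 1) ^ b + (c - 1) * (c - 2) ^ b := by
    intro j
    rw [Finset.sum_comm]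
    have hk : ∀ k : Fin c,
        (∑ ω : Fin b → Fin c, if ∀ i, ω i ∉ ({j, k} : Finset (Fin c)) then 1 else 0)
          = (c - ({j, k} : Finset (Fin c)).card) ^ b := by
      intro k
      rw [← Finset.card_filter, card_avoid]
    rw [Finset.sum_congr rfl fun k _ => hk k,
      ← Finset.add_sum_erase _ _ (Finset.mem_univ j)]
    have h1 : ({j, j} : Finset (Fin c)).card = 1 := by simp
    have h2 : ∀ k ∈ Finset.univ.erase j, (c - ({j, k} : Finset (Fin c)).card) ^ b
        = (c - 2) ^ b := by
      intro k hk
      have : k ≠ j := (Finset.mem_erase.mp hk).1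
      rw [Finset.card_pair (Ne.symm this)]
    rw [h1, Finset.sum_congr rfl h2, Finset.sum_const, Finset.card_erase_of_mem
      (Finset.mem_univ j), Finset.card_univ, Fintype.card_fin, smul_eq_mul]
  rw [Finset.sum_congr rfl fun j _ => hj j, Finset.sum_const, Finset.card_univ,
    Fintype.card_fin, smul_eq_mul, mul_add, mul_assoc]


/-- Variance of the number of empty boxes when `b` balls are thrown independently and
uniformly into `c ≥ 2` boxes:
`Var(X) = c(c-1)((c-2)/c)^b + c((c-1)/c)^b − c²((c-1)/c)^{2b}`. -/
theorem empBox_variance (b c : ℕ) (hc : 2 ≤ c) :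
    (∑ ω : Fin b → Fin c, (emptyCount ω : ℝ) ^ 2) / (c : ℝ) ^ b
        - ((∑ ω : Fin b → Fin c, (emptyCount ω : ℝ)) / (c : ℝ) ^ b) ^ 2
      = (c : ℝ) * ((c : ℝ) - 1) * (((c : ℝ) - 2) / (c : ℝ)) ^ b
        + (c : ℝ) * (((c : ℝ) - 1) / (c : ℝ)) ^ b
        - (c : ℝ) ^ 2 * (((c : ℝ) - 1) / (c : ℝ)) ^ (2 * b) := by
  have h1le : 1 ≤ c := le_trans (by norm_num) hc
  have e1 : (∑ ω : Fin b → Fin c, (emptyCount ω : ℝ)) = (c : ℝ) * ((c : ℝ) - 1) ^ b := by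
    rw [← Nat.cast_sum, sum_one]
    push_cast [Nat.cast_sub h1le]
    ring
  have e2 : (∑ ω : Fin b → Fin c, (emptyCount ω : ℝ) ^ 2)
      = (c : ℝ) * ((c : ℝ) - 1) ^ b + (c : ℝ) * ((c : ℝ) - 1) * ((c : ℝ) - 2) ^ b := by
    have : (∑ ω : Fin b → Fin c, (emptyCount ω : ℝ) ^ 2)
        = ((∑ ω : Fin b → Fin c, (emptyCount ω) ^ 2 : ℕ) : ℝ) := by push_cast; rfl
    rw [this, sum_sq]
    push_cast [Nat.cast_sub h1le, Nat.cast_sub hc]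
    ring
  have hc0 : (c : ℝ) ≠ 0 := by positivity
  have hcb : (c : ℝ) ^ b ≠ 0 := pow_ne_zero _ hc0
  rw [e1, e2, div_pow, div_pow, mul_comm 2 b, pow_mul, div_pow]
  field_simp
  ring
end

section
/- Let X be the number of empty boxes when b balls are thrown independently and uniformly into c boxes. Then for 0 ≤ x ≤ c, P(X = x) = Σ_{i=0}^{c−x} (−1)^i · C(x+i, i) · C(c, x+i) · (1 − (x+i)/c)^b. -/
open Finset

/-- The set of empty boxes. -/
def emptySet {b c : ℕ} (ω : Fin b → Fin c) : Finset (Fin c) :=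
  Finset.univ.filter (fun j : Fin c => ∀ i : Fin b, ω i ≠ j)

lemma emptyCount_eq {b c : ℕ} (ω : Fin b → Fin c) : emptyCount ω = (emptySet ω).card := rfl

/-- Alternating sum of binomial coefficients, over ℝ. -/
lemma alt_sum_choose (m : ℕ) :
    ∑ j ∈ Finset.range (m + 1), (-1 : ℝ) ^ j * (m.choose j : ℝ)
      = if m = 0 then 1 else 0 := by
  have h := Int.alternating_sum_range_choose (n := m)
  have h2 := congrArg (Int.cast : ℤ → ℝ) h
  push_cast at h2
  split_ifs with hm <;> simp_all

/-- The key numeric identity : `∑_k C(n,k) (-1)^(k-x) C(k,x) = [n = x]`. -/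
lemma phi_sum (n x : ℕ) :
    ∑ k ∈ Finset.range (n + 1),
        (n.choose k : ℝ) * ((-1 : ℝ) ^ (k - x) * (k.choose x : ℝ))
      = if n = x then 1 else 0 := by
  rcases lt_or_ge n x with hlt | hge
  · rw [if_neg (by omega)]
    apply Finset.sum_eq_zero
    intro k hk
    rw [Finset.mem_range] at hk
    rw [Nat.choose_eq_zero_of_lt (show k < x by omega)]
    simp
  · have hsplit : Finset.range (n + 1) = Finset.Ico 0 x ∪ Finset.Ico x (n + 1) := by
      rw [Finset.range_eq_Ico, Finset.Ico_union_Ico_eq_Ico (by omega) (by omega)]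
    rw [hsplit, Finset.sum_union (by
      simp only [Finset.disjoint_left, Finset.mem_Ico]; intro a h1 h2; omega)]
    have h1 : ∑ k ∈ Finset.Ico 0 x,
        (n.choose k : ℝ) * ((-1 : ℝ) ^ (k - x) * (k.choose x : ℝ)) = 0 := by
      apply Finset.sum_eq_zero
      intro k hk
      rw [Finset.mem_Ico] at hk
      rw [Nat.choose_eq_zero_of_lt (show k < x by omega)]
      simp
    rw [h1, zero_add, Finset.sum_Ico_eq_sum_range]
    have h2 : ∀ j ∈ Finset.range (n + 1 - x),
        (n.choose (x + j) : ℝ) * ((-1 : ℝ) ^ (x + j - x) * ((x + j).choose x : ℝ))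
          = (n.choose x : ℝ) * ((-1 : ℝ) ^ j * ((n - x).choose j : ℝ)) := by
      intro j hj
      rw [Finset.mem_range] at hj
      have hc : n.choose (x + j) * (x + j).choose x = n.choose x * (n - x).choose j := by
        have := Nat.choose_mul (n := n) (k := x + j) (s := x) (by omega)
        simpa using this
      have hcR : (n.choose (x + j) : ℝ) * ((x + j).choose x : ℝ)
          = (n.choose x : ℝ) * ((n - x).choose j : ℝ) := by
        exact_mod_cast congrArg (Nat.cast : ℕ → ℝ) hc
      have hj' : x + j - x = j := by omega
      rw [hj']
      linear_combination ((-1 : ℝ) ^ j) * hcR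
    rw [Finset.sum_congr rfl h2, ← Finset.mul_sum]
    have hnx : n + 1 - x = (n - x) + 1 := by omega
    rw [hnx, alt_sum_choose (n - x)]
    rcases eq_or_ne n x with h | h
    · simp [h]
    · rw [if_neg h, if_neg (by omega)]
      simp

section Counting

variable {b c : ℕ}

/-- Number of configurations whose empty set contains `S`. -/
lemma card_superset_event (S : Finset (Fin c)) :
    (Finset.univ.filter (fun ω : Fin b → Fin c => S ⊆ emptySet ω)).card
      = (c - S.card) ^ b := by
  have hset : (Finset.univ.filter (fun ω : Fin b → Fin c => S ⊆ emptySet ω))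
      = Fintype.piFinset (fun _ : Fin b => Sᶜ) := by
    ext ω
    simp only [Finset.mem_filter, Finset.mem_univ, true_and, Fintype.mem_piFinset,
      Finset.mem_compl, emptySet, Finset.subset_iff]
    constructor
    · intro h i hi
      exact h hi i rfl
    · intro h j hj i hij
      exact h i (hij ▸ hj)
  rw [hset, Fintype.card_piFinset]
  simp [Finset.card_compl]

/-- Fibering a count over the exact empty set. -/
lemma card_fiber (p : (Fin b → Fin c) → Prop) [DecidablePred p]
    (B : Finset (Finset (Fin c))) (h1 : ∀ ω, p ω ↔ emptySet ω ∈ B) :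
    (Finset.univ.filter (fun ω : Fin b → Fin c => p ω)).card
      = ∑ T ∈ B, (Finset.univ.filter (fun ω : Fin b → Fin c => emptySet ω = T)).card := by
  rw [Finset.card_eq_sum_card_fiberwise (f := emptySet) (t := B)
    (fun ω hω => (h1 ω).1 (Finset.mem_filter.1 hω).2)]
  apply Finset.sum_congr rfl
  intro T hT
  congr 1
  rw [Finset.filter_filter]
  apply Finset.filter_congr
  intro ω _
  constructor
  · exact fun h => h.2
  · exact fun h => ⟨(h1 ω).2 (h ▸ hT), h⟩

end Counting

/-- The probability mass function of the number `X` of empty boxes when `b` balls are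
thrown independently and uniformly into `c` boxes: for `0 ≤ x ≤ c`,
`P(X = x) = Σ_{i=0}^{c−x} (−1)^i C(x+i,i) C(c,x+i) (1 − (x+i)/c)^b`. -/
theorem empBox_pmf (b c x : ℕ) (hc : 1 ≤ c) (hx : x ≤ c) :
    ((Finset.univ.filter (fun ω : Fin b → Fin c => emptyCount ω = x)).card : ℝ)
        / (c : ℝ) ^ b
      = ∑ i ∈ Finset.range (c - x + 1),
          (-1 : ℝ) ^ i * ((x + i).choose i : ℝ) * (c.choose (x + i) : ℝ)
            * (1 - ((x : ℝ) + (i : ℝ)) / (c : ℝ)) ^ b := by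
  classical
  set F : Finset (Fin c) → ℕ :=
    fun T => (Finset.univ.filter (fun ω : Fin b → Fin c => emptySet ω = T)).card with hF
  -- Step 1 : LHS numerator as a sum over sets of size x
  have hA : (Finset.univ.filter (fun ω : Fin b → Fin c => emptyCount ω = x)).card
      = ∑ S ∈ Finset.powersetCard x (Finset.univ : Finset (Fin c)), F S :=
    card_fiber (fun ω => emptyCount ω = x) _
      (fun ω => by simp only [emptyCount_eq, Finset.mem_powersetCard_univ])
  -- Step 2 : superset counts
  have hG : ∀ S : Finset (Fin c),
      ((c - S.card) ^ b : ℕ)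
        = ∑ T ∈ (Finset.univ : Finset (Fin c)).powerset.filter (S ⊆ ·), F T := by
    intro S
    rw [← card_superset_event S]
    exact card_fiber (fun ω => S ⊆ emptySet ω) _ (fun ω => by simp)
  -- Step 3 : inclusion-exclusion (Möbius inversion)
  have hMain : ∑ T ∈ (Finset.univ : Finset (Fin c)).powerset,
          ((-1 : ℝ) ^ (T.card - x) * (T.card.choose x : ℝ)) * (((c - T.card) ^ b : ℕ) : ℝ)
      = ((∑ S ∈ Finset.powersetCard x (Finset.univ : Finset (Fin c)), F S : ℕ) : ℝ) := by
    have step1 : ∑ T ∈ (Finset.univ : Finset (Fin c)).powerset,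
        ((-1 : ℝ) ^ (T.card - x) * (T.card.choose x : ℝ)) * (((c - T.card) ^ b : ℕ) : ℝ)
        = ∑ T ∈ (Finset.univ : Finset (Fin c)).powerset,
            ∑ U ∈ (Finset.univ : Finset (Fin c)).powerset.filter (T ⊆ ·),
              ((-1 : ℝ) ^ (T.card - x) * (T.card.choose x : ℝ)) * (F U : ℝ) := by
      apply Finset.sum_congr rfl
      intro T _
      rw [← Finset.mul_sum]
      congr 1
      rw [hG T]
      push_cast
      rfl
    have step2 : ∑ T ∈ (Finset.univ : Finset (Fin c)).powerset,
        ∑ U ∈ (Finset.univ : Finset (Fin c)).powerset.filter (T ⊆ ·),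
          ((-1 : ℝ) ^ (T.card - x) * (T.card.choose x : ℝ)) * (F U : ℝ)
        = ∑ U ∈ (Finset.univ : Finset (Fin c)).powerset,
            ∑ T ∈ U.powerset,
              ((-1 : ℝ) ^ (T.card - x) * (T.card.choose x : ℝ)) * (F U : ℝ) := by
      apply Finset.sum_comm'
      intro T U
      simp [Finset.mem_powerset]
    have step3 : ∀ U ∈ (Finset.univ : Finset (Fin c)).powerset,
        ∑ T ∈ U.powerset,
            ((-1 : ℝ) ^ (T.card - x) * (T.card.choose x : ℝ)) * (F U : ℝ)
          = (if U.card = x then (F U : ℝ) else 0) := by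
      intro U _
      rw [← Finset.sum_mul]
      have hinner : ∑ T ∈ U.powerset, (-1 : ℝ) ^ (T.card - x) * (T.card.choose x : ℝ)
          = if U.card = x then 1 else 0 := by
        rw [Finset.sum_powerset]
        rw [Finset.sum_congr rfl (fun k _ => by
          rw [Finset.sum_congr rfl (fun T hT => by
              rw [(Finset.mem_powersetCard.1 hT).2]),
            Finset.sum_const, Finset.card_powersetCard, nsmul_eq_mul])]
        exact phi_sum U.card x
      rw [hinner]
      split_ifs <;> simp
    rw [step1, step2, Finset.sum_congr rfl step3, ← Finset.sum_filter,
      ← Finset.powersetCard_eq_filter]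
    push_cast
    rfl
  -- Step 4 : group the big sum by cardinality
  have hGroup : ∑ T ∈ (Finset.univ : Finset (Fin c)).powerset,
          ((-1 : ℝ) ^ (T.card - x) * (T.card.choose x : ℝ)) * (((c - T.card) ^ b : ℕ) : ℝ)
      = ∑ k ∈ Finset.range (c + 1),
          (c.choose k : ℝ) * (((-1 : ℝ) ^ (k - x) * (k.choose x : ℝ))
            * (((c - k) ^ b : ℕ) : ℝ)) := by
    rw [Finset.sum_powerset]
    rw [Finset.card_univ, Fintype.card_fin]
    apply Finset.sum_congr rfl
    intro k _
    rw [Finset.sum_congr rfl (fun T hT => by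
        rw [(Finset.mem_powersetCard.1 hT).2]),
      Finset.sum_const, Finset.card_powersetCard, Finset.card_univ, Fintype.card_fin,
      nsmul_eq_mul]
  -- Step 5 : reindex the grouped sum
  have hReindex : ∑ k ∈ Finset.range (c + 1),
          (c.choose k : ℝ) * (((-1 : ℝ) ^ (k - x) * (k.choose x : ℝ))
            * (((c - k) ^ b : ℕ) : ℝ))
      = ∑ i ∈ Finset.range (c - x + 1),
          (c.choose (x + i) : ℝ) * (((-1 : ℝ) ^ (x + i - x) * ((x + i).choose x : ℝ))
            * (((c - (x + i)) ^ b : ℕ) : ℝ)) := by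
    have hsplit : Finset.range (c + 1) = Finset.Ico 0 x ∪ Finset.Ico x (c + 1) := by
      rw [Finset.range_eq_Ico, Finset.Ico_union_Ico_eq_Ico (by omega) (by omega)]
    rw [hsplit, Finset.sum_union (by
      simp only [Finset.disjoint_left, Finset.mem_Ico]; intro a h1 h2; omega)]
    have h1 : ∑ k ∈ Finset.Ico 0 x,
        (c.choose k : ℝ) * (((-1 : ℝ) ^ (k - x) * (k.choose x : ℝ))
          * (((c - k) ^ b : ℕ) : ℝ)) = 0 := by
      apply Finset.sum_eq_zero
      intro k hk
      rw [Finset.mem_Ico] at hk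
      rw [Nat.choose_eq_zero_of_lt (show k < x by omega)]
      simp
    rw [h1, zero_add, Finset.sum_Ico_eq_sum_range]
    have : c + 1 - x = c - x + 1 := by omega
    rw [this]
  -- Step 6 : put everything together
  rw [hA]
  rw [← hMain, hGroup, hReindex, Finset.sum_div]
  apply Finset.sum_congr rfl
  intro i hi
  rw [Finset.mem_range] at hi
  have hix : x + i ≤ c := by omega
  have hcast : ((c - (x + i) : ℕ) : ℝ) = (c : ℝ) - ((x : ℝ) + (i : ℝ)) := by
    push_cast [Nat.cast_sub hix]
    ring
  have hcne : (c : ℝ) ≠ 0 := by positivity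
  have hpow : (1 - ((x : ℝ) + (i : ℝ)) / (c : ℝ)) ^ b
      = (((c - (x + i)) ^ b : ℕ) : ℝ) / (c : ℝ) ^ b := by
    push_cast
    rw [hcast]
    rw [← div_pow]
    congr 1
    field_simp
  rw [hpow]
  have hsub : x + i - x = i := by omega
  have hsymm : (x + i).choose x = (x + i).choose i := Nat.choose_symm_add
  rw [hsub, hsymm]
  ring
end

section
/- In the geometric frog model on the complete graph K_{N+1}, with state (I_t, A_t, D_t) and transitions defined via X_{t+1} ~ Binomial(A_t, p), Z_{t+1} ~ Binomial(X_{t+1}, I_t/N) (conditionally), and I_{t+1} ~ EmpBox(Z_{t+1}, I_t), the conditional expectation satisfies E(I_{t+1} | F_t) = I_t·(1 − p/N)^{A_t}. -/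
open Finset

/-- Binomial weight: `P(Binomial(n,q) = k)`. -/
noncomputable def binomW (n : ℕ) (q : ℝ) (k : ℕ) : ℝ :=
  (n.choose k : ℝ) * q ^ k * (1 - q) ^ (n - k)

lemma sum_binomW_mul (n : ℕ) (q r : ℝ) :
    ∑ k ∈ Finset.range (n + 1), binomW n q k * r ^ k = (1 - q + q * r) ^ n := by
  have h := add_pow (q * r) (1 - q) n
  rw [show q * r + (1 - q) = 1 - q + q * r by ring] at h
  rw [h]
  refine Finset.sum_congr rfl fun k _ => ?_
  simp only [binomW, mul_pow]
  ring

lemma sum_emptyCount (z I : ℕ) :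
    ∑ ω : Fin z → Fin I, emptyCount ω = I * (I - 1) ^ z := by
  unfold emptyCount
  simp_rw [Finset.card_filter]
  rw [Finset.sum_comm]
  have hj : ∀ j : Fin I,
      (∑ ω : Fin z → Fin I, if ∀ i, ω i ≠ j then 1 else 0) = (I - 1) ^ z := by
    intro j
    rw [← Finset.card_filter]
    have : Finset.univ.filter (fun ω : Fin z → Fin I => ∀ i, ω i ≠ j)
        = Fintype.piFinset (fun _ : Fin z => Finset.univ.erase j) := by
      ext ω
      simp
    rw [this, Fintype.card_piFinset]
    simp [Finset.card_erase_of_mem]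
  rw [Finset.sum_congr rfl (fun j _ => hj j)]
  simp [mul_comm]

/-- Geometric frog model on `K_{N+1}`: given `F_t` with `A_t = A` active particles and
`I_t = I` unvisited vertices, draw `X ~ Binomial(A, p)`, then `Z ~ Binomial(X, I/N)`,
then `I_{t+1} ~ EmpBox(Z, I)`. Then `E(I_{t+1} | F_t) = I (1 − p/N)^A`. -/
theorem geom_cond_expectation_I (N I A : ℕ) (p : ℝ) (hN : 3 ≤ N)
    (hI : 1 ≤ I) (hIN : I ≤ N) (hp0 : 0 ≤ p) (hp1 : p ≤ 1) :
    ∑ x ∈ Finset.range (A + 1), binomW A p x *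
        ∑ z ∈ Finset.range (x + 1), binomW x ((I : ℝ) / (N : ℝ)) z *
          ((∑ ω : Fin z → Fin I, (emptyCount ω : ℝ)) / (I : ℝ) ^ z)
      = (I : ℝ) * (1 - p / (N : ℝ)) ^ A := by
  have hI0 : (I : ℝ) ≠ 0 := Nat.cast_ne_zero.mpr (by omega)
  have hN0 : (N : ℝ) ≠ 0 := Nat.cast_ne_zero.mpr (by omega)
  have hinner : ∀ z : ℕ,
      (∑ ω : Fin z → Fin I, (emptyCount ω : ℝ)) / (I : ℝ) ^ z
        = (I : ℝ) * (((I : ℝ) - 1) / (I : ℝ)) ^ z := by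
    intro z
    rw [← Nat.cast_sum, sum_emptyCount, div_pow, Nat.cast_mul, Nat.cast_pow,
      Nat.cast_sub hI]
    push_cast
    rw [mul_div_assoc]
  simp_rw [hinner]
  have hz : ∀ x : ℕ,
      ∑ z ∈ Finset.range (x + 1), binomW x ((I : ℝ) / (N : ℝ)) z *
          ((I : ℝ) * (((I : ℝ) - 1) / (I : ℝ)) ^ z)
        = (I : ℝ) * (1 - 1 / (N : ℝ)) ^ x := by
    intro x
    have : ∀ z ∈ Finset.range (x + 1),
        binomW x ((I : ℝ) / (N : ℝ)) z * ((I : ℝ) * (((I : ℝ) - 1) / (I : ℝ)) ^ z)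
          = (I : ℝ) * (binomW x ((I : ℝ) / (N : ℝ)) z * (((I : ℝ) - 1) / (I : ℝ)) ^ z) := by
      intro z _; ring
    rw [Finset.sum_congr rfl this, ← Finset.mul_sum, sum_binomW_mul]
    have hb : 1 - (I : ℝ) / (N : ℝ) + (I : ℝ) / (N : ℝ) * (((I : ℝ) - 1) / (I : ℝ))
        = 1 - 1 / (N : ℝ) := by
      field_simp
      ring
    rw [hb]
  simp_rw [hz]
  have : ∀ x ∈ Finset.range (A + 1),
      binomW A p x * ((I : ℝ) * (1 - 1 / (N : ℝ)) ^ x)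
        = (I : ℝ) * (binomW A p x * (1 - 1 / (N : ℝ)) ^ x) := by
    intro x _; ring
  rw [Finset.sum_congr rfl this, ← Finset.mul_sum, sum_binomW_mul]
  congr 1
  field_simp
  ring
end

section
/- In the geometric frog model setup, the conditional covariance of I_{t+1} and X_{t+1} given F_t equals −p·A_t·I_t·(1 − p/N)^{A_t}·(1−p)/(N−p). -/
open Finset

/-- Conditional expectation of `f(X_{t+1}, I_{t+1})` in the geometric frog model:
`X ~ Binomial(A, p)`, then `Z ~ Binomial(X, I/N)`, then `I_{t+1} ~ EmpBox(Z, I)`. -/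
noncomputable def geomE (N I A : ℕ) (p : ℝ) (f : ℕ → ℕ → ℝ) : ℝ :=
  ∑ x ∈ Finset.range (A + 1), binomW A p x *
    ∑ z ∈ Finset.range (x + 1), binomW x ((I : ℝ) / (N : ℝ)) z *
      ((∑ ω : Fin z → Fin I, f x (emptyCount ω)) / (I : ℝ) ^ z)

lemma sum_binomW_mul_pow (n : ℕ) (q t : ℝ) :
    ∑ k ∈ Finset.range (n + 1), binomW n q k * t ^ k = (1 - q + q * t) ^ n := by
  rw [show (1 - q + q * t) = (q * t + (1 - q)) by ring, add_pow]
  refine Finset.sum_congr rfl fun k hk => ?_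
  simp only [binomW, mul_pow]
  ring

lemma sum_binomW_mul_id (n : ℕ) (q t : ℝ) (hn : 1 ≤ n) :
    ∑ k ∈ Finset.range (n + 1), binomW n q k * ((k : ℝ) * t ^ k)
      = n * q * t * (1 - q + q * t) ^ (n - 1) := by
  rw [Finset.sum_range_succ']
  simp only [Nat.cast_zero, zero_mul, mul_zero, add_zero]
  have hn1 : n - 1 + 1 = n := Nat.succ_pred_eq_of_pos hn
  have key : ∀ k, binomW n q (k + 1) * (((k : ℝ) + 1) * t ^ (k + 1))
      = (n * q * t) * (binomW (n - 1) q k * t ^ k) := by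
    intro k
    have hc : ((k : ℝ) + 1) * (n.choose (k + 1) : ℝ) = n * ((n - 1).choose k : ℝ) := by
      have h := Nat.add_one_mul_choose_eq (n - 1) k
      simp only [Nat.succ_eq_add_one, hn1] at h
      have h2 : ((n * (n-1).choose k : ℕ) : ℝ) = ((n.choose (k+1) * (k+1) : ℕ) : ℝ) := by
        rw [h]
      push_cast at h2
      linarith
    have hsub : n - (k + 1) = n - 1 - k := by omega
    simp only [binomW, hsub]
    linear_combination (q ^ (k+1) * (1 - q) ^ (n - 1 - k) * t ^ (k+1)) * hc
  have step : ∀ k ∈ Finset.range n, binomW n q (k + 1) * ((↑(k + 1) : ℝ) * t ^ (k + 1))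
      = (n * q * t) * (binomW (n - 1) q k * t ^ k) := by
    intro k _
    rw [← key k]
    push_cast
    ring
  rw [Finset.sum_congr rfl step, ← Finset.mul_sum]
  have hs := sum_binomW_mul_pow (n - 1) q t
  rw [hn1] at hs
  rw [hs]

lemma geomE_X (N I A : ℕ) (p : ℝ) (hI : 1 ≤ I) (hA : 1 ≤ A) :
    geomE N I A p (fun x _ => (x : ℝ)) = (A : ℝ) * p := by
  have hI0 : (I : ℝ) ≠ 0 := by exact_mod_cast Nat.one_le_iff_ne_zero.mp hI
  unfold geomE
  have h1 : ∀ x ∈ Finset.range (A + 1),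
      binomW A p x * (∑ z ∈ Finset.range (x + 1), binomW x ((I:ℝ)/(N:ℝ)) z *
        ((∑ _ω : Fin z → Fin I, (x : ℝ)) / (I : ℝ) ^ z))
      = binomW A p x * ((x : ℝ) * (1:ℝ) ^ x) := by
    intro x _
    congr 1
    have h2 : ∀ z ∈ Finset.range (x + 1), binomW x ((I:ℝ)/(N:ℝ)) z *
        ((∑ _ω : Fin z → Fin I, (x : ℝ)) / (I : ℝ) ^ z)
        = binomW x ((I:ℝ)/(N:ℝ)) z * ((x : ℝ) * (1:ℝ) ^ z) := by
      intro z _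
      congr 1
      rw [Finset.sum_const, Finset.card_univ]
      simp only [Fintype.card_fun, Fintype.card_fin, nsmul_eq_mul, Nat.cast_pow, one_pow]
      rw [mul_comm, mul_div_assoc, div_self (by positivity), mul_one]
    rw [Finset.sum_congr rfl h2]
    have h3 : ∀ z ∈ Finset.range (x + 1), binomW x ((I:ℝ)/(N:ℝ)) z * ((x : ℝ) * (1:ℝ) ^ z)
        = (x : ℝ) * (binomW x ((I:ℝ)/(N:ℝ)) z * (1:ℝ) ^ z) := fun z _ => by ring
    rw [Finset.sum_congr rfl h3, ← Finset.mul_sum, sum_binomW_mul_pow]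
    simp
  rw [Finset.sum_congr rfl h1, sum_binomW_mul_id A p 1 hA]
  simp

lemma sum_emptyCount_real (z I : ℕ) (hI : 1 ≤ I) :
    (∑ ω : Fin z → Fin I, ((emptyCount ω : ℕ) : ℝ)) = (I : ℝ) * ((I : ℝ) - 1) ^ z := by
  have h := sum_emptyCount z I
  have h2 : ((∑ ω : Fin z → Fin I, emptyCount ω : ℕ) : ℝ) = ((I * (I - 1) ^ z : ℕ) : ℝ) := by
    rw [h]
  push_cast [Nat.cast_sub hI] at h2
  exact h2

lemma inner_I (I N x z : ℕ) (hI : 1 ≤ I) :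
    binomW x ((I:ℝ)/(N:ℝ)) z * ((∑ ω : Fin z → Fin I, ((emptyCount ω : ℕ) : ℝ)) / (I : ℝ) ^ z)
    = (I : ℝ) * (binomW x ((I:ℝ)/(N:ℝ)) z * (((I:ℝ) - 1) / (I:ℝ)) ^ z) := by
  have hI0 : (I : ℝ) ≠ 0 := by exact_mod_cast Nat.one_le_iff_ne_zero.mp hI
  rw [sum_emptyCount_real z I hI, div_pow]
  field_simp

lemma geomE_I (N I A : ℕ) (p : ℝ) (hI : 1 ≤ I) (hN : 1 ≤ N) :
    geomE N I A p (fun _ i => (i : ℝ)) = (I : ℝ) * (1 - p / (N : ℝ)) ^ A := by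
  have hI0 : (I : ℝ) ≠ 0 := by exact_mod_cast Nat.one_le_iff_ne_zero.mp hI
  have hN0 : (N : ℝ) ≠ 0 := by exact_mod_cast Nat.one_le_iff_ne_zero.mp hN
  have hqt : 1 - (I:ℝ)/(N:ℝ) + (I:ℝ)/(N:ℝ) * (((I:ℝ) - 1) / (I:ℝ)) = 1 - 1/(N:ℝ) := by
    field_simp
    ring
  unfold geomE
  have h1 : ∀ x ∈ Finset.range (A + 1),
      binomW A p x * (∑ z ∈ Finset.range (x + 1), binomW x ((I:ℝ)/(N:ℝ)) z *
        ((∑ ω : Fin z → Fin I, ((emptyCount ω : ℕ) : ℝ)) / (I : ℝ) ^ z))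
      = (I : ℝ) * (binomW A p x * (1 - 1/(N:ℝ)) ^ x) := by
    intro x _
    rw [Finset.sum_congr rfl (fun z _ => inner_I I N x z hI), ← Finset.mul_sum,
      sum_binomW_mul_pow, hqt]
    ring
  rw [Finset.sum_congr rfl h1, ← Finset.mul_sum, sum_binomW_mul_pow]
  congr 2
  field_simp
  ring

lemma geomE_IX (N I A : ℕ) (p : ℝ) (hI : 1 ≤ I) (hN : 1 ≤ N) (hA : 1 ≤ A) :
    geomE N I A p (fun x i => (i : ℝ) * (x : ℝ))
      = (I : ℝ) * ((A : ℝ) * p * (1 - 1/(N:ℝ)) * (1 - p/(N:ℝ)) ^ (A - 1)) := by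
  have hI0 : (I : ℝ) ≠ 0 := by exact_mod_cast Nat.one_le_iff_ne_zero.mp hI
  have hN0 : (N : ℝ) ≠ 0 := by exact_mod_cast Nat.one_le_iff_ne_zero.mp hN
  have hqt : 1 - (I:ℝ)/(N:ℝ) + (I:ℝ)/(N:ℝ) * (((I:ℝ) - 1) / (I:ℝ)) = 1 - 1/(N:ℝ) := by
    field_simp
    ring
  unfold geomE
  have h1 : ∀ x ∈ Finset.range (A + 1),
      binomW A p x * (∑ z ∈ Finset.range (x + 1), binomW x ((I:ℝ)/(N:ℝ)) z *
        ((∑ ω : Fin z → Fin I, ((emptyCount ω : ℕ) : ℝ) * (x : ℝ)) / (I : ℝ) ^ z))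
      = (I : ℝ) * (binomW A p x * ((x : ℝ) * (1 - 1/(N:ℝ)) ^ x)) := by
    intro x _
    have h2 : ∀ z ∈ Finset.range (x + 1), binomW x ((I:ℝ)/(N:ℝ)) z *
        ((∑ ω : Fin z → Fin I, ((emptyCount ω : ℕ) : ℝ) * (x : ℝ)) / (I : ℝ) ^ z)
        = (x : ℝ) * ((I : ℝ) * (binomW x ((I:ℝ)/(N:ℝ)) z * (((I:ℝ) - 1) / (I:ℝ)) ^ z)) := by
      intro z _
      rw [← Finset.sum_mul, ← inner_I I N x z hI]
      ring
    rw [Finset.sum_congr rfl h2, ← Finset.mul_sum, ← Finset.mul_sum,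
      sum_binomW_mul_pow, hqt]
    ring
  rw [Finset.sum_congr rfl h1, ← Finset.mul_sum]
  have h3 : ∀ x ∈ Finset.range (A + 1),
      binomW A p x * ((x : ℝ) * (1 - 1/(N:ℝ)) ^ x)
      = binomW A p x * ((x : ℝ) * (1 - 1/(N:ℝ)) ^ x) := fun _ _ => rfl
  rw [sum_binomW_mul_id A p (1 - 1/(N:ℝ)) hA]
  have h4 : 1 - p + p * (1 - 1/(N:ℝ)) = 1 - p/(N:ℝ) := by
    field_simp
    ring
  rw [h4]


/-- In the geometric frog model, the conditional covariance of `I_{t+1}` and `X_{t+1}`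
given `F_t` equals `−p A I (1 − p/N)^A (1−p)/(N−p)`. -/
theorem geom_cond_covariance_IX (N I A : ℕ) (p : ℝ) (hN : 3 ≤ N)
    (hp0 : 0 < p) (hp1 : p < 1) (hI : 1 ≤ I) (hA : 1 ≤ A) :
    geomE N I A p (fun x i => (i : ℝ) * (x : ℝ))
        - geomE N I A p (fun _ i => (i : ℝ)) * geomE N I A p (fun x _ => (x : ℝ))
      = -(p * (A : ℝ) * (I : ℝ) * (1 - p / (N : ℝ)) ^ A * (1 - p) / ((N : ℝ) - p)) := by
  have hN1 : 1 ≤ N := by omega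
  have hNr : (3 : ℝ) ≤ (N : ℝ) := by exact_mod_cast hN
  have hN0 : (N : ℝ) ≠ 0 := by linarith
  have hNp : (N : ℝ) - p ≠ 0 := by nlinarith
  rw [geomE_X N I A p hI hA, geomE_I N I A p hI hN1, geomE_IX N I A p hI hN1 hA]
  have hpow : (1 - p/(N:ℝ)) ^ A = (1 - p/(N:ℝ)) ^ (A - 1) * (1 - p/(N:ℝ)) := by
    rw [← pow_succ]
    congr 1
    omega
  rw [hpow]
  field_simp
  ring
end

section
/- In the geometric frog model setup, the conditional variance of I_{t+1} given F_t equals I_t·[(I_t−1)(1 − 2p/N)^{A_t} − I_t·(1 − p/N)^{2A_t} + (1 − p/N)^{A_t}]. -/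
open Finset

lemma binom_sum (n : ℕ) (q s : ℝ) :
    ∑ k ∈ Finset.range (n + 1), binomW n q k * s ^ k = (q * s + (1 - q)) ^ n := by
  rw [add_pow]
  refine Finset.sum_congr rfl fun k _ => ?_
  simp only [binomW]
  ring

lemma count_pi {z c : ℕ} (t : Finset (Fin c)) :
    (Finset.univ.filter (fun ω : Fin z → Fin c => ∀ i, ω i ∈ t)).card = t.card ^ z := by
  have h : (Finset.univ.filter (fun ω : Fin z → Fin c => ∀ i, ω i ∈ t))
      = Fintype.piFinset (fun _ : Fin z => t) := by
    ext ω; simp [Fintype.mem_piFinset]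
  rw [h, Fintype.card_piFinset]
  simp

lemma sum_empty_one (I z : ℕ) :
    ∑ ω : Fin z → Fin I, emptyCount ω = I * (I - 1) ^ z := by
  simp only [emptyCount, Finset.card_filter]
  rw [Finset.sum_comm]
  have h : ∀ j : Fin I,
      (∑ ω : Fin z → Fin I, if ∀ i, ω i ≠ j then 1 else 0) = (I - 1) ^ z := by
    intro j
    rw [← Finset.card_filter]
    have h2 : (Finset.univ.filter (fun ω : Fin z → Fin I => ∀ i, ω i ≠ j))
        = (Finset.univ.filter (fun ω : Fin z → Fin I => ∀ i, ω i ∈ ({j}ᶜ : Finset (Fin I)))) := by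
      simp
    rw [h2, count_pi]
    simp [Finset.card_compl]
  simp [h, Finset.card_univ]

lemma sum_empty_sq (I z : ℕ) :
    ∑ ω : Fin z → Fin I, (emptyCount ω) ^ 2
      = I * (I - 1) * (I - 2) ^ z + I * (I - 1) ^ z := by
  have key : ∀ ω : Fin z → Fin I, (emptyCount ω) ^ 2
      = ∑ j : Fin I, ∑ k : Fin I,
          (if (∀ i, ω i ≠ j) ∧ (∀ i, ω i ≠ k) then 1 else 0) := by
    intro ω
    rw [sq, emptyCount, Finset.card_filter, Finset.sum_mul_sum]
    refine Finset.sum_congr rfl fun j _ => Finset.sum_congr rfl fun k _ => ?_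
    split_ifs <;> simp_all
  simp only [key]
  rw [Finset.sum_comm]
  have h : ∀ j : Fin I,
      (∑ ω : Fin z → Fin I, ∑ k : Fin I,
        if (∀ i, ω i ≠ j) ∧ (∀ i, ω i ≠ k) then 1 else 0)
      = (I - 1) ^ z + (I - 1) * (I - 2) ^ z := by
    intro j
    rw [Finset.sum_comm]
    have h2 : ∀ k : Fin I,
        (∑ ω : Fin z → Fin I,
          if (∀ i, ω i ≠ j) ∧ (∀ i, ω i ≠ k) then 1 else 0)
        = (I - ({j, k} : Finset (Fin I)).card) ^ z := by
      intro k
      rw [← Finset.card_filter]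
      have h3 : (Finset.univ.filter
            (fun ω : Fin z → Fin I => (∀ i, ω i ≠ j) ∧ (∀ i, ω i ≠ k)))
          = (Finset.univ.filter
            (fun ω : Fin z → Fin I => ∀ i, ω i ∈ ({j, k}ᶜ : Finset (Fin I)))) := by
        ext ω
        simp [forall_and]
      rw [h3, count_pi, Finset.card_compl]
      simp
    simp only [h2]
    rw [← Finset.add_sum_erase _ _ (Finset.mem_univ j)]
    have hjj : ({j, j} : Finset (Fin I)).card = 1 := by simp
    have hrest : ∀ k ∈ Finset.univ.erase j,
        (I - ({j, k} : Finset (Fin I)).card) ^ z = (I - 2) ^ z := by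
      intro k hk
      have hkj : k ≠ j := Finset.ne_of_mem_erase hk
      have : ({j, k} : Finset (Fin I)).card = 2 := by
        rw [Finset.card_insert_of_notMem (by simp [hkj.symm])]; simp
      rw [this]
    rw [Finset.sum_congr rfl hrest, Finset.sum_const, hjj]
    simp [Finset.card_erase_of_mem, Finset.card_univ, mul_comm]
  simp only [h]
  rw [Finset.sum_const, Finset.card_univ]
  simp [Fintype.card_fin, mul_add, mul_comm, mul_assoc, mul_left_comm]
  ring

lemma geomE_one (N I A : ℕ) (p : ℝ) (hN : 3 ≤ N) (hI : 2 ≤ I) :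
    geomE N I A p (fun _ i => (i : ℝ)) = (I : ℝ) * (1 - p / (N : ℝ)) ^ A := by
  have hIR : (I : ℝ) ≠ 0 := by
    exact_mod_cast Nat.cast_ne_zero.mpr (by omega)
  have hNR : (N : ℝ) ≠ 0 := by
    exact_mod_cast Nat.cast_ne_zero.mpr (by omega)
  have hc1 : ((I - 1 : ℕ) : ℝ) = (I : ℝ) - 1 := by
    rw [Nat.cast_sub (by omega)]; simp
  unfold geomE
  have h1 : ∀ z : ℕ, ((∑ ω : Fin z → Fin I, ((emptyCount ω : ℕ) : ℝ)) / (I : ℝ) ^ z)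
      = (I : ℝ) * (((I : ℝ) - 1) / (I : ℝ)) ^ z := by
    intro z
    rw [← Nat.cast_sum, sum_empty_one]
    push_cast
    rw [hc1, div_pow, mul_div_assoc]
  have hmid : ∀ x : ℕ,
      (∑ z ∈ Finset.range (x + 1), binomW x ((I : ℝ) / (N : ℝ)) z *
        ((∑ ω : Fin z → Fin I, ((emptyCount ω : ℕ) : ℝ)) / (I : ℝ) ^ z))
      = (I : ℝ) * (1 - 1 / (N : ℝ)) ^ x := by
    intro x
    simp only [h1]
    have h2 : ∀ z : ℕ, binomW x ((I : ℝ) / (N : ℝ)) z *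
        ((I : ℝ) * (((I : ℝ) - 1) / (I : ℝ)) ^ z)
        = (I : ℝ) * (binomW x ((I : ℝ) / (N : ℝ)) z * (((I : ℝ) - 1) / (I : ℝ)) ^ z) :=
      fun z => by ring
    simp only [h2]
    rw [← Finset.mul_sum, binom_sum]
    congr 2
    field_simp
    ring
  simp only [hmid]
  have h3 : ∀ x : ℕ, binomW A p x * ((I : ℝ) * (1 - 1 / (N : ℝ)) ^ x)
      = (I : ℝ) * (binomW A p x * (1 - 1 / (N : ℝ)) ^ x) := fun x => by ring
  simp only [h3]
  rw [← Finset.mul_sum, binom_sum]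
  congr 2
  field_simp
  ring

lemma geomE_sq (N I A : ℕ) (p : ℝ) (hN : 3 ≤ N) (hI : 2 ≤ I) :
    geomE N I A p (fun _ i => (i : ℝ) ^ 2)
      = (I : ℝ) * ((I : ℝ) - 1) * (1 - 2 * p / (N : ℝ)) ^ A
        + (I : ℝ) * (1 - p / (N : ℝ)) ^ A := by
  have hIR : (I : ℝ) ≠ 0 := by
    exact_mod_cast Nat.cast_ne_zero.mpr (by omega)
  have hNR : (N : ℝ) ≠ 0 := by
    exact_mod_cast Nat.cast_ne_zero.mpr (by omega)
  have hc1 : ((I - 1 : ℕ) : ℝ) = (I : ℝ) - 1 := by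
    rw [Nat.cast_sub (by omega)]; simp
  have hc2 : ((I - 2 : ℕ) : ℝ) = (I : ℝ) - 2 := by
    rw [Nat.cast_sub (by omega)]; simp
  unfold geomE
  have h1 : ∀ z : ℕ, ((∑ ω : Fin z → Fin I, ((emptyCount ω : ℕ) : ℝ) ^ 2) / (I : ℝ) ^ z)
      = (I : ℝ) * ((I : ℝ) - 1) * (((I : ℝ) - 2) / (I : ℝ)) ^ z
        + (I : ℝ) * (((I : ℝ) - 1) / (I : ℝ)) ^ z := by
    intro z
    have : (∑ ω : Fin z → Fin I, ((emptyCount ω : ℕ) : ℝ) ^ 2)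
        = (((∑ ω : Fin z → Fin I, (emptyCount ω) ^ 2 : ℕ)) : ℝ) := by
      push_cast; rfl
    rw [this, sum_empty_sq]
    push_cast
    rw [hc1, hc2, div_pow, div_pow]
    field_simp
    try ring
  have hmid : ∀ x : ℕ,
      (∑ z ∈ Finset.range (x + 1), binomW x ((I : ℝ) / (N : ℝ)) z *
        ((∑ ω : Fin z → Fin I, ((emptyCount ω : ℕ) : ℝ) ^ 2) / (I : ℝ) ^ z))
      = (I : ℝ) * ((I : ℝ) - 1) * (1 - 2 / (N : ℝ)) ^ x
        + (I : ℝ) * (1 - 1 / (N : ℝ)) ^ x := by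
    intro x
    simp only [h1]
    have h2 : ∀ z : ℕ, binomW x ((I : ℝ) / (N : ℝ)) z *
        ((I : ℝ) * ((I : ℝ) - 1) * (((I : ℝ) - 2) / (I : ℝ)) ^ z
          + (I : ℝ) * (((I : ℝ) - 1) / (I : ℝ)) ^ z)
        = (I : ℝ) * ((I : ℝ) - 1) *
            (binomW x ((I : ℝ) / (N : ℝ)) z * (((I : ℝ) - 2) / (I : ℝ)) ^ z)
          + (I : ℝ) * (binomW x ((I : ℝ) / (N : ℝ)) z * (((I : ℝ) - 1) / (I : ℝ)) ^ z) :=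
      fun z => by ring
    simp only [h2]
    rw [Finset.sum_add_distrib, ← Finset.mul_sum, ← Finset.mul_sum, binom_sum, binom_sum]
    congr 3 <;> (field_simp; try ring)
  simp only [hmid]
  have h3 : ∀ x : ℕ, binomW A p x *
      ((I : ℝ) * ((I : ℝ) - 1) * (1 - 2 / (N : ℝ)) ^ x
        + (I : ℝ) * (1 - 1 / (N : ℝ)) ^ x)
      = (I : ℝ) * ((I : ℝ) - 1) * (binomW A p x * (1 - 2 / (N : ℝ)) ^ x)
        + (I : ℝ) * (binomW A p x * (1 - 1 / (N : ℝ)) ^ x) := fun x => by ring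
  simp only [h3]
  rw [Finset.sum_add_distrib, ← Finset.mul_sum, ← Finset.mul_sum, binom_sum, binom_sum]
  congr 3 <;> (field_simp; try ring)

/-- In the geometric frog model, the conditional variance of `I_{t+1}` given `F_t` equals
`I [(I−1)(1 − 2p/N)^A − I (1 − p/N)^{2A} + (1 − p/N)^A]`. -/
theorem geom_cond_variance_I (N I A : ℕ) (p : ℝ) (hN : 3 ≤ N)
    (hp0 : 0 ≤ p) (hp1 : p ≤ 1) (hI : 2 ≤ I) :
    geomE N I A p (fun _ i => (i : ℝ) ^ 2)
        - (geomE N I A p (fun _ i => (i : ℝ))) ^ 2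
      = (I : ℝ) * (((I : ℝ) - 1) * (1 - 2 * p / (N : ℝ)) ^ A
          - (I : ℝ) * (1 - p / (N : ℝ)) ^ (2 * A)
          + (1 - p / (N : ℝ)) ^ A) := by
  rw [geomE_one N I A p hN hI, geomE_sq N I A p hN hI, mul_comm 2 A, pow_mul]
  ring
end

section
/- For integers I with 2 ≤ I ≤ N+1, A ≥ 0, N ≥ 3 and p ∈ [0,1], one has (1 − 2p/N)^A − (1 − p/N)^{2A} ≤ 0; consequently the quantity I/(N+1)²·[(I−1)(1−2p/N)^A − I(1−p/N)^{2A} + (1−p/N)^A] is at most 1/(N+1). -/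
/-- Key inequality used to bound the conditional variance of the scaled process in the
geometric frog model: for `2 ≤ I ≤ N+1`, `A ≥ 0`, `N ≥ 3` and `p ∈ [0,1]`,
`(1 − 2p/N)^A − (1 − p/N)^{2A} ≤ 0`, and consequently
`I/(N+1)² [(I−1)(1−2p/N)^A − I(1−p/N)^{2A} + (1−p/N)^A] ≤ 1/(N+1)`. -/
theorem geom_variance_bound (I A N : ℕ) (p : ℝ) (hI : 2 ≤ I) (hIN : I ≤ N + 1)
    (hN : 3 ≤ N) (hp0 : 0 ≤ p) (hp1 : p ≤ 1) :
    (1 - 2 * p / (N : ℝ)) ^ A - (1 - p / (N : ℝ)) ^ (2 * A) ≤ 0 ∧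
    (I : ℝ) / ((N : ℝ) + 1) ^ 2 *
        (((I : ℝ) - 1) * (1 - 2 * p / (N : ℝ)) ^ A
          - (I : ℝ) * (1 - p / (N : ℝ)) ^ (2 * A)
          + (1 - p / (N : ℝ)) ^ A)
      ≤ 1 / ((N : ℝ) + 1) := by
  have hNr : (3:ℝ) ≤ (N:ℝ) := by exact_mod_cast hN
  have hNpos : (0:ℝ) < (N:ℝ) := by linarith
  have h2 : (0:ℝ) ≤ 1 - 2 * p / N := by
    rw [sub_nonneg, div_le_one hNpos]; linarith
  have h1 : (0:ℝ) ≤ 1 - p / N := by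
    rw [sub_nonneg, div_le_one hNpos]; linarith
  have h1le : 1 - p / N ≤ 1 := by
    have : 0 ≤ p / N := by positivity
    linarith
  have key : (1 - 2 * p / (N:ℝ)) ^ A ≤ (1 - p / (N:ℝ)) ^ (2 * A) := by
    have hsq : (1 - 2 * p / N) ≤ (1 - p / N) ^ 2 := by
      have : 0 ≤ (p / N) ^ 2 := by positivity
      have h : (1 - p / N) ^ 2 - (1 - 2 * p / N) = (p / N) ^ 2 := by
        field_simp; ring
      linarith
    calc (1 - 2 * p / (N:ℝ)) ^ A ≤ ((1 - p / N) ^ 2) ^ A :=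
          pow_le_pow_left₀ h2 hsq A
      _ = (1 - p / N) ^ (2 * A) := by rw [← pow_mul]
  refine ⟨by linarith, ?_⟩
  have hzle : (1 - p / (N:ℝ)) ^ A ≤ 1 := pow_le_one₀ h1 h1le
  have hy0 : 0 ≤ (1 - p / (N:ℝ)) ^ (2 * A) := pow_nonneg h1 _
  have hIr : (2:ℝ) ≤ (I:ℝ) := by exact_mod_cast hI
  have hINr : (I:ℝ) ≤ (N:ℝ) + 1 := by exact_mod_cast hIN
  have hmul := mul_le_mul_of_nonneg_left key (by linarith : (0:ℝ) ≤ (I:ℝ) - 1)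
  have hinner : ((I:ℝ) - 1) * (1 - 2 * p / N) ^ A - I * (1 - p / N) ^ (2 * A)
      + (1 - p / N) ^ A ≤ 1 := by nlinarith
  have hfac : 0 ≤ (I:ℝ) / ((N:ℝ) + 1) ^ 2 := by positivity
  calc (I : ℝ) / ((N : ℝ) + 1) ^ 2 *
        (((I : ℝ) - 1) * (1 - 2 * p / (N : ℝ)) ^ A
          - (I : ℝ) * (1 - p / (N : ℝ)) ^ (2 * A)
          + (1 - p / (N : ℝ)) ^ A)
      ≤ (I:ℝ) / ((N:ℝ) + 1) ^ 2 * 1 := mul_le_mul_of_nonneg_left hinner hfac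
    _ ≤ 1 / ((N:ℝ) + 1) := by
        rw [mul_one, div_le_div_iff₀ (by positivity) (by linarith)]
        nlinarith
end

section
/- Fix p ∈ (0,1) and N ≥ 3, and let (ι_t, α_t, δ_t) be the geometric-model deterministic system with ι_0 = N/(N+1), α_0 = 1/(N+1), δ_0 = 0. Then ι_t > 0 and α_t > 0 for all t, the sequence (ι_t) is strictly decreasing, (δ_t) is increasing, and hence the limits ι_∞ = lim ι_t and δ_∞ = lim δ_t exist; moreover lim_{t→∞} α_t = 0 and ι_∞ + δ_∞ = 1. -/
open Filter

/-- The discrete-time Kermack–McKendrick deterministic system associated to the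
geometric frog model on `K_{N+1}`:
`ι_{t+1} = ι_t e^{−pα_t}`, `α_{t+1} = pα_t + ι_t(1 − e^{−pα_t})`,
`δ_{t+1} = δ_t + (1−p)α_t`, with `ι_0 = N/(N+1)`, `α_0 = 1/(N+1)`, `δ_0 = 0`. -/
noncomputable def geomSys (p : ℝ) (N : ℕ) : ℕ → ℝ × ℝ × ℝ
  | 0 => ((N : ℝ) / ((N : ℝ) + 1), 1 / ((N : ℝ) + 1), 0)
  | t + 1 =>
      let s := geomSys p N t
      (s.1 * Real.exp (-p * s.2.1),
       p * s.2.1 + s.1 * (1 - Real.exp (-p * s.2.1)),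
       s.2.2 + (1 - p) * s.2.1)

/-- For the geometric-model deterministic system: `ι_t, α_t > 0`, `(ι_t)` is strictly
decreasing, `(δ_t)` is increasing, the limits `ι_∞ = lim ι_t` and `δ_∞ = lim δ_t`
exist, `α_t → 0`, and `ι_∞ + δ_∞ = 1`. -/
theorem geomSys_limits (p : ℝ) (N : ℕ) (hp0 : 0 < p) (hp1 : p < 1) (hN : 3 ≤ N) :
    (∀ t, 0 < (geomSys p N t).1) ∧
    (∀ t, 0 < (geomSys p N t).2.1) ∧
    StrictAnti (fun t => (geomSys p N t).1) ∧
    Monotone (fun t => (geomSys p N t).2.2) ∧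
    ∃ ιinf δinf : ℝ,
      Tendsto (fun t => (geomSys p N t).1) atTop (nhds ιinf) ∧
      Tendsto (fun t => (geomSys p N t).2.2) atTop (nhds δinf) ∧
      Tendsto (fun t => (geomSys p N t).2.1) atTop (nhds 0) ∧
      ιinf + δinf = 1 := by
  set ι : ℕ → ℝ := fun t => (geomSys p N t).1 with hιdef
  set α : ℕ → ℝ := fun t => (geomSys p N t).2.1 with hαdef
  set δ : ℕ → ℝ := fun t => (geomSys p N t).2.2 with hδdef
  have e1 : ∀ t, ι (t + 1) = ι t * Real.exp (-p * α t) := fun t => rfl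
  have e2 : ∀ t, α (t + 1) = p * α t + ι t * (1 - Real.exp (-p * α t)) := fun t => rfl
  have e3 : ∀ t, δ (t + 1) = δ t + (1 - p) * α t := fun t => rfl
  have hpos : ∀ t, 0 < ι t ∧ 0 < α t := by
    intro t
    induction t with
    | zero =>
      have hN' : (0 : ℝ) < (N : ℝ) := by
        have : (3 : ℝ) ≤ (N : ℝ) := by exact_mod_cast hN
        linarith
      constructor
      · show (0 : ℝ) < (N : ℝ) / ((N : ℝ) + 1); positivity
      · show (0 : ℝ) < 1 / ((N : ℝ) + 1); positivity
    | succ t ih =>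
      obtain ⟨h1, h2⟩ := ih
      have hexp : Real.exp (-p * α t) < 1 := by
        rw [Real.exp_lt_one_iff]
        nlinarith
      constructor
      · rw [e1]; positivity
      · rw [e2]
        have := Real.exp_pos (-p * α t)
        nlinarith
  have hsum : ∀ t, ι t + α t + δ t = 1 := by
    intro t
    induction t with
    | zero =>
      show (N : ℝ) / ((N : ℝ) + 1) + 1 / ((N : ℝ) + 1) + 0 = 1
      have : (N : ℝ) + 1 ≠ 0 := by positivity
      field_simp
      ring
    | succ t ih =>
      rw [e1, e2, e3]; linear_combination ih
  have hanti : StrictAnti ι := by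
    apply strictAnti_nat_of_succ_lt
    intro t
    rw [e1]
    have hexp : Real.exp (-p * α t) < 1 := by
      rw [Real.exp_lt_one_iff]
      nlinarith [(hpos t).2]
    nlinarith [(hpos t).1, Real.exp_pos (-p * α t)]
  have hmono : Monotone δ := by
    apply monotone_nat_of_le_succ
    intro t
    rw [e3]
    nlinarith [(hpos t).2]
  have hbdd : BddAbove (Set.range δ) := by
    refine ⟨1, ?_⟩
    rintro x ⟨t, rfl⟩
    have := hsum t
    nlinarith [(hpos t).1, (hpos t).2]
  have hδconv : Tendsto δ atTop (nhds (⨆ t, δ t)) := tendsto_atTop_ciSup hmono hbdd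
  set δinf : ℝ := ⨆ t, δ t with hδinf
  have hδ1 : Tendsto (fun t => δ (t + 1)) atTop (nhds δinf) :=
    hδconv.comp (tendsto_add_atTop_nat 1)
  have hα0 : Tendsto α atTop (nhds 0) := by
    have heq : α = fun t => (δ (t + 1) - δ t) * (1 - p)⁻¹ := by
      funext t
      have h1p : (1 : ℝ) - p ≠ 0 := by linarith
      rw [e3]
      field_simp
      ring
    rw [heq]
    have := (hδ1.sub hδconv).mul_const (1 - p)⁻¹
    simpa using this
  have hιconv : Tendsto ι atTop (nhds (1 - δinf)) := by
    have heq : ι = fun t => 1 - α t - δ t := by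
      funext t; linarith [hsum t]
    rw [heq]
    have : Tendsto (fun t => 1 - α t - δ t) atTop (nhds (1 - 0 - δinf)) :=
      (tendsto_const_nhds.sub hα0).sub hδconv
    simpa using this
  exact ⟨fun t => (hpos t).1, fun t => (hpos t).2, hanti, hmono,
    1 - δinf, δinf, hιconv, hδconv, hα0, by ring⟩
end

section
/- Fix p ∈ (0,1) and N ≥ 3. The limit ι_∞^{(N)} of the geometric-model deterministic system satisfies ι_∞^{(N)} = τ^{(N)}(ι_∞^{(N)}), where τ^{(N)}(x) = (N/(N+1))·exp{−(p/(1−p))(1 − x)}; i.e., ι_∞^{(N)} is a fixed point of τ^{(N)} in [0,1]. -/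
open Filter

/-- The limit `ι_∞^{(N)}` of the geometric-model deterministic system exists and is a
fixed point of `τ^{(N)}(x) = (N/(N+1)) exp{−(p/(1−p))(1 − x)}` in `[0,1]`. -/
theorem geomSys_limit_fixed_point (p : ℝ) (N : ℕ) (hp0 : 0 < p) (hp1 : p < 1)
    (hN : 3 ≤ N) :
    ∃ L : ℝ, Tendsto (fun t => (geomSys p N t).1) atTop (nhds L) ∧
      L ∈ Set.Icc (0:ℝ) 1 ∧
      L = ((N : ℝ) / ((N : ℝ) + 1)) * Real.exp (-(p / (1 - p)) * (1 - L)) := by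
  have hN1 : (0:ℝ) < (N:ℝ) + 1 := by positivity
  have h1p : (0:ℝ) < 1 - p := by linarith
  set ι : ℕ → ℝ := fun t => (geomSys p N t).1 with hι
  set α : ℕ → ℝ := fun t => (geomSys p N t).2.1 with hα
  set δ : ℕ → ℝ := fun t => (geomSys p N t).2.2 with hδ
  have hstep : ∀ t, ι (t+1) = ι t * Real.exp (-p * α t) ∧
      α (t+1) = p * α t + ι t * (1 - Real.exp (-p * α t)) ∧
      δ (t+1) = δ t + (1 - p) * α t := by
    intro t
    refine ⟨?_, ?_, ?_⟩ <;> simp [hι, hα, hδ, geomSys]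
  have h0i : ι 0 = (N:ℝ)/((N:ℝ)+1) := by simp [hι, geomSys]
  have h0a : α 0 = 1/((N:ℝ)+1) := by simp [hα, geomSys]
  have h0d : δ 0 = 0 := by simp [hδ, geomSys]
  -- nonnegativity
  have hnn : ∀ t, 0 ≤ ι t ∧ 0 ≤ α t := by
    intro t
    induction t with
    | zero =>
      constructor
      · rw [h0i]; positivity
      · rw [h0a]; positivity
    | succ t ih =>
      have he1 : Real.exp (-p * α t) ≤ 1 := by
        rw [Real.exp_le_one_iff]
        nlinarith [ih.2]
      constructor
      · rw [(hstep t).1]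
        exact mul_nonneg ih.1 (Real.exp_pos _).le
      · rw [(hstep t).2.1]
        have : 0 ≤ ι t * (1 - Real.exp (-p * α t)) :=
          mul_nonneg ih.1 (by linarith)
        nlinarith [ih.2]
  -- conservation
  have hsum : ∀ t, ι t + α t + δ t = 1 := by
    intro t
    induction t with
    | zero => rw [h0i, h0a, h0d]; field_simp; ring
    | succ t ih =>
      rw [(hstep t).1, (hstep t).2.1, (hstep t).2.2]
      linear_combination ih
  -- ι antitone, δ monotone
  have hanti : Antitone ι := by
    refine antitone_nat_of_succ_le fun t => ?_
    rw [(hstep t).1]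
    have he1 : Real.exp (-p * α t) ≤ 1 := by
      rw [Real.exp_le_one_iff]; nlinarith [(hnn t).2]
    nlinarith [(hnn t).1, (Real.exp_pos (-p * α t)).le]
  have hmonoδ : Monotone δ := by
    refine monotone_nat_of_le_succ fun t => ?_
    rw [(hstep t).2.2]
    nlinarith [(hnn t).2]
  have hδle : ∀ t, δ t ≤ 1 := fun t => by nlinarith [hsum t, (hnn t).1, (hnn t).2]
  -- limit of δ
  have hbdd : BddAbove (Set.range δ) := ⟨1, by rintro _ ⟨t, rfl⟩; exact hδle t⟩
  set D : ℝ := ⨆ t, δ t with hD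
  have hδlim : Tendsto δ atTop (nhds D) := tendsto_atTop_ciSup hmonoδ hbdd
  -- the key identity ι t = ι 0 * exp (-(p/(1-p)) δ t)
  have hid : ∀ t, ι t = ι 0 * Real.exp (-(p/(1-p)) * δ t) := by
    intro t
    induction t with
    | zero => rw [h0d]; simp
    | succ t ih =>
      rw [(hstep t).1, ih, (hstep t).2.2, mul_assoc, ← Real.exp_add]
      congr 2
      field_simp
      ring
  set L : ℝ := ι 0 * Real.exp (-(p/(1-p)) * D) with hL
  -- ι converges to L
  have hιlim : Tendsto ι atTop (nhds L) := by
    have h1 : Tendsto (fun t => -(p/(1-p)) * δ t) atTop (nhds (-(p/(1-p)) * D)) :=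
      hδlim.const_mul _
    have h2 : Tendsto (fun t => Real.exp (-(p/(1-p)) * δ t)) atTop
        (nhds (Real.exp (-(p/(1-p)) * D))) :=
      (Real.continuous_exp.tendsto _).comp h1
    have h3 := h2.const_mul (ι 0)
    refine h3.congr fun t => (hid t).symm
  -- α tends to 0
  have hαlim : Tendsto α atTop (nhds 0) := by
    have hshift : Tendsto (fun t => δ (t+1)) atTop (nhds D) :=
      hδlim.comp (tendsto_add_atTop_nat 1)
    have hdiff : Tendsto (fun t => (δ (t+1) - δ t) / (1-p)) atTop (nhds ((D - D)/(1-p))) :=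
      (hshift.sub hδlim).div_const _
    simp only [sub_self, zero_div] at hdiff
    refine hdiff.congr fun t => ?_
    rw [(hstep t).2.2]
    field_simp
    ring
  -- identify D = 1 - L
  have hDL : D = 1 - L := by
    have h1 : Tendsto (fun t => ι t + α t + δ t) atTop (nhds (L + 0 + D)) :=
      (hιlim.add hαlim).add hδlim
    have h2 : Tendsto (fun t => ι t + α t + δ t) atTop (nhds 1) := by
      refine tendsto_const_nhds.congr fun t => (hsum t).symm
    have := tendsto_nhds_unique h1 h2
    linarith
  refine ⟨L, hιlim, ⟨?_, ?_⟩, ?_⟩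
  · rw [hL]
    have : (0:ℝ) ≤ ι 0 := (hnn 0).1
    positivity
  · -- L ≤ 1
    have hL0 : L ≤ ι 0 := by
      refine le_of_tendsto' hιlim fun t => hanti (Nat.zero_le t)
    have : ι 0 ≤ 1 := by
      rw [h0i]; rw [div_le_one hN1]; linarith
    linarith
  · rw [← hDL, ← h0i, hL]
end

section
/- For p ∈ (1/2, 1) and N ≥ 3, τ^{(N)}(2(1−p)) < 2(1−p), where τ^{(N)}(x) = (N/(N+1))·exp{−(p/(1−p))(1−x)}. Consequently every fixed point of τ^{(N)} in [0,1] is strictly less than 2(1−p). -/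
/-- For `p ∈ (1/2, 1)` and `N ≥ 3`, with `τ^{(N)}(x) = (N/(N+1)) exp{−(p/(1−p))(1−x)}`,
one has `τ^{(N)}(2(1−p)) < 2(1−p)`; consequently every fixed point of `τ^{(N)}` in
`[0,1]` is strictly less than `2(1−p)`. -/
theorem tauN_estimate (p : ℝ) (N : ℕ) (hp0 : 1 / 2 < p) (hp1 : p < 1) (hN : 3 ≤ N) :
    ((N : ℝ) / ((N : ℝ) + 1)) * Real.exp (-(p / (1 - p)) * (1 - 2 * (1 - p)))
        < 2 * (1 - p) ∧
    ∀ x ∈ Set.Icc (0:ℝ) 1,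
      ((N : ℝ) / ((N : ℝ) + 1)) * Real.exp (-(p / (1 - p)) * (1 - x)) = x →
        x < 2 * (1 - p) := by
  have h1p : 0 < 1 - p := by linarith
  have hN3 : (3:ℝ) ≤ (N:ℝ) := by exact_mod_cast hN
  have hc1 : ((N : ℝ) / ((N : ℝ) + 1)) < 1 := by
    rw [div_lt_one (by linarith)]; linarith
  have hc0 : (0:ℝ) < (N : ℝ) / ((N : ℝ) + 1) := by positivity
  -- key exponential bound
  have hexp : Real.exp (-(p / (1 - p)) * (1 - 2 * (1 - p))) ≤ 2 * (1 - p) := by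
    set t : ℝ := p * (2 * p - 1) / (1 - p) with ht_def
    have ht : 0 < t := by
      apply div_pos (by nlinarith) h1p
    have h1 : t + 1 ≤ Real.exp t := Real.add_one_le_exp t
    have h2 : Real.exp (-(p / (1 - p)) * (1 - 2 * (1 - p))) = (Real.exp t)⁻¹ := by
      rw [← Real.exp_neg]
      congr 1
      rw [ht_def, ← neg_div, div_mul_eq_mul_div, ← neg_div]
      congr 1
      ring
    rw [h2]
    have hpos : 0 < t + 1 := by linarith
    have h3 : (Real.exp t)⁻¹ ≤ (t + 1)⁻¹ := by
      apply inv_anti₀ hpos h1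
    refine h3.trans ?_
    rw [inv_eq_one_div, div_le_iff₀ hpos, ht_def]
    have hmul : p * (2 * p - 1) / (1 - p) * (1 - p) = p * (2 * p - 1) :=
      div_mul_cancel₀ _ h1p.ne'
    nlinarith [sq_nonneg (2 * p - 1)]
  have hmain : ((N : ℝ) / ((N : ℝ) + 1)) * Real.exp (-(p / (1 - p)) * (1 - 2 * (1 - p)))
      < 2 * (1 - p) := by
    have hE : 0 < Real.exp (-(p / (1 - p)) * (1 - 2 * (1 - p))) := Real.exp_pos _
    nlinarith
  refine ⟨hmain, ?_⟩
  rintro x ⟨hx0, hx1⟩ hfx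
  by_contra hcon
  push_neg at hcon
  rcases eq_or_lt_of_le hcon with heq | hlt
  · rw [← heq] at hfx; linarith
  · -- s < x ≤ 1, use convexity of exp
    have hs1 : 2 * (1 - p) < 1 := by linarith
    have hden : (0:ℝ) < 1 - 2 * (1 - p) := by linarith
    set t' : ℝ := (x - 2 * (1 - p)) / (1 - 2 * (1 - p)) with ht'_def
    have ht'pos : 0 < t' := div_pos (by linarith) hden
    have ht'le : t' ≤ 1 := by
      rw [ht'_def, div_le_one hden]; linarith
    have h1t' : 0 ≤ 1 - t' := by linarith
    have hsum : (1 - t') + t' = 1 := by ring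
    have hconv := convexOn_exp.2 (Set.mem_univ (-(p / (1 - p)) * (1 - 2 * (1 - p))))
      (Set.mem_univ (0:ℝ)) h1t' ht'pos.le hsum
    simp only [smul_eq_mul, mul_zero, add_zero, Real.exp_zero, mul_one] at hconv
    have harg : (1 - t') * (-(p / (1 - p)) * (1 - 2 * (1 - p))) = -(p / (1 - p)) * (1 - x) := by
      rw [ht'_def]
      field_simp
      ring
    rw [harg] at hconv
    -- hconv : exp(-(p/(1-p))*(1-x)) ≤ (1-t') * exp(-(p/(1-p))*(1-s)) + t'
    have hE : 0 < Real.exp (-(p / (1 - p)) * (1 - 2 * (1 - p))) := Real.exp_pos _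
    have ht'mul : t' * (1 - 2 * (1 - p)) = x - 2 * (1 - p) := by
      rw [ht'_def]; exact div_mul_cancel₀ _ hden.ne'
    nlinarith [mul_le_mul_of_nonneg_left hconv hc0.le,
      mul_nonneg h1t' (by linarith [hmain] :
        (0:ℝ) ≤ 2 * (1 - p) - (↑N / (↑N + 1)) * Real.exp (-(p / (1 - p)) * (1 - 2 * (1 - p)))),
      mul_pos ht'pos (by linarith : (0:ℝ) < 1 - ↑N / (↑N + 1)), ht'mul]
end
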